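/- arXiv:1301.5544 — 2 statements merged into one kernel-verified Lean document; each statement's English description precedes it below -/
import Mathlib

section
/- If Φ(r) = -Gm(r)/r with m(r) = -4π∫₀ʳ p(s)s² ds for a continuous function p, and Φ has a finite limit Φ₀ at r = 0 with Φ'(r)·r → 0 as r → 0, then p(r)·4πGr² → Φ₀ as r → 0⁺, i.e. p(r) = Φ₀/(4πGr²) + O(1). -/
/-!
Since `r Φ(r) = 4πG ∫₀ʳ p(s) s² ds`, differentiating in `r` gives
`4πG r² p(r) = Φ(r) + r Φ'(r)`, whose two terms tend to `Φ₀` and `0`.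
-/

open Real Filter Set MeasureTheory intervalIntegral Topology

theorem mul_eq_add_mul_deriv_of_eventuallyEq_integral {f Φ : ℝ → ℝ} {s : Set ℝ} {a r c Φ' : ℝ}
    (hf : ContinuousOn f s) (hs : IsOpen s) (hr : r ∈ s) (hint : IntervalIntegrable f volume a r)
    (hΦ : HasDerivAt Φ Φ' r)
    (heq : (fun t => t * Φ t) =ᶠ[𝓝 r] fun t => c * ∫ u in a..t, f u) :
    c * f r = Φ r + r * Φ' := by
  have hprimitive : HasDerivAt (fun t => c * ∫ u in a..t, f u) (c * f r) r :=
    (integral_hasDerivAt_right hint (hf.stronglyMeasurableAtFilter hs r hr)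
      (hf.continuousAt (hs.mem_nhds hr))).const_mul c
  have hproduct : HasDerivAt (fun t => t * Φ t) (1 * Φ r + r * Φ') r :=
    (hasDerivAt_id r).mul hΦ
  simpa using ((hproduct.congr_of_eventuallyEq heq.symm).unique hprimitive).symm

theorem integrable_singularity_pressure_divergence_general
    (G Φ₀ : ℝ) (p Φ Φ' : ℝ → ℝ)
    (hp : ContinuousOn p (Set.Ioi 0))
    (hint : ∀ r > 0, IntervalIntegrable (fun s => p s * s ^ 2) volume 0 r)
    (hΦ : ∀ r > 0, Φ r = -G * (-(4 * π) * ∫ s in (0:ℝ)..r, p s * s ^ 2) / r)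
    (hderiv : ∀ r > 0, HasDerivAt Φ (Φ' r) r)
    (hlim : Tendsto Φ (nhdsWithin 0 (Set.Ioi 0)) (nhds Φ₀))
    (hlim' : Tendsto (fun r => r * Φ' r) (nhdsWithin 0 (Set.Ioi 0)) (nhds 0)) :
    Tendsto (fun r => p r * (4 * π * G * r ^ 2)) (nhdsWithin 0 (Set.Ioi 0)) (nhds Φ₀) := by
  have hmass : ∀ r > 0, r * Φ r = 4 * π * G * ∫ s in (0:ℝ)..r, p s * s ^ 2 := fun r hr => by
    rw [hΦ r hr]
    field_simp
  have hpressure : ∀ r > 0, p r * (4 * π * G * r ^ 2) = Φ r + r * Φ' r := fun r hr => by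
    rw [← mul_eq_add_mul_deriv_of_eventuallyEq_integral (f := fun s => p s * s ^ 2)
      (hp.mul (continuousOn_pow 2)) isOpen_Ioi hr (hint r hr) (hderiv r hr)
      (eventually_of_mem (isOpen_Ioi.mem_nhds hr) hmass)]
    ring
  have hsum : Tendsto (fun r => Φ r + r * Φ' r) (𝓝[>] 0) (𝓝 Φ₀) := by
    simpa using hlim.add hlim'
  exact hsum.congr' (eventually_nhdsWithin_of_forall fun r hr => (hpressure r hr).symm)

/-- Near an integrable singularity, if Φ(r) = -G m(r)/r with
m(r) = -4π∫₀ʳ p(s)s² ds, Φ(r) → Φ₀ and r·Φ'(r) → 0 as r → 0⁺,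
then p(r)·4πGr² → Φ₀ as r → 0⁺. -/
theorem integrable_singularity_pressure_divergence
    (G Φ₀ : ℝ) (hG : 0 < G) (p Φ Φ' : ℝ → ℝ)
    (hp : ContinuousOn p (Set.Ioi 0))
    (hint : ∀ r > 0, IntervalIntegrable (fun s => p s * s ^ 2) volume 0 r)
    (hΦ : ∀ r > 0, Φ r = -G * (-(4 * π) * ∫ s in (0:ℝ)..r, p s * s ^ 2) / r)
    (hderiv : ∀ r > 0, HasDerivAt Φ (Φ' r) r)
    (hlim : Tendsto Φ (nhdsWithin 0 (Set.Ioi 0)) (nhds Φ₀))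
    (hlim' : Tendsto (fun r => r * Φ' r) (nhdsWithin 0 (Set.Ioi 0)) (nhds 0)) :
    Tendsto (fun r => p r * (4 * π * G * r ^ 2)) (nhdsWithin 0 (Set.Ioi 0)) (nhds Φ₀) :=
  integrable_singularity_pressure_divergence_general G Φ₀ p Φ Φ' hp hint hΦ hderiv hlim hlim'
end

section
/- In the limit r₀ → 0 with M fixed, the potential Φ^{(A)} converges pointwise on ℝ \ {0} to -GM/|r|, and the density ε^{(A)}(r) = p₀(r₀²/r² - 1)𝟙_{|r|<r₀} (with p₀ = 3M/(8πr₀³)) converges in the sense of distributions on ℝ to M δ(r)/(2π r²) acting as: for every smooth compactly supported f, ∫ ε^{(A)}(r) 4π r² f(r) dr → 2M f(0). -/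
open Real Filter Set MeasureTheory

/-!
Weighted by the shell volume element `4πr²`, the density `ε^{(A)}_{r₀}` is, away from `r = 0`,
exactly `2M` times the rescaled Epanechnikov kernel `r₀⁻¹ K (r / r₀)`, `K x = ¾ (1 - x²)` on
`(-1, 1)`. Since `K` is a compactly supported probability density, these rescalings form an
approximate identity, so the integral against `f` tends to `2M f 0`. The potential equals
`-GM/|r|` as soon as `r₀ < |r|`, which gives the pointwise limit.
-/

noncomputable def epanechnikov : ℝ → ℝ :=
  (Ioo (-1) 1).indicator fun x => 3 / 4 * (1 - x ^ 2)

lemma mem_Ioo_neg_one_one_iff {x : ℝ} : x ∈ Ioo (-1) 1 ↔ |x| < 1 := abs_lt.symm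

lemma epanechnikov_nonneg (x : ℝ) : 0 ≤ epanechnikov x := by
  refine indicator_nonneg (fun y hy => ?_) x
  have : y ^ 2 < 1 := by rwa [sq_lt_one_iff_abs_lt_one, ← mem_Ioo_neg_one_one_iff]
  linarith

lemma integral_epanechnikov : ∫ x, epanechnikov x = 1 := by
  rw [epanechnikov, integral_indicator measurableSet_Ioo, ← integral_Ioc_eq_integral_Ioo,
    ← intervalIntegral.integral_of_le (by norm_num), intervalIntegral.integral_const_mul,
    intervalIntegral.integral_sub intervalIntegrable_const
      ((continuous_pow 2).intervalIntegrable _ _)]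
  norm_num

lemma tendsto_norm_mul_epanechnikov_cobounded :
    Tendsto (fun x : ℝ => ‖x‖ * epanechnikov x) (Bornology.cobounded ℝ) (nhds 0) := by
  refine tendsto_const_nhds.congr' ?_
  filter_upwards [eventually_cobounded_le_norm 1] with x hx
  have : x ∉ Ioo (-1) 1 := by
    rw [mem_Ioo_neg_one_one_iff, not_lt]; exact hx
  simp [epanechnikov, this]

theorem tendsto_integral_rescaled_epanechnikov_mul {g : ℝ → ℝ} (hg : Integrable g)
    (h'g : ContinuousAt g 0) :
    Tendsto (fun ε : ℝ => ∫ x, ε⁻¹ * epanechnikov (ε⁻¹ * x) * g x) (nhdsWithin 0 (Ioi 0))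
      (nhds (g 0)) := by
  have := tendsto_integral_comp_smul_smul_of_integrable (μ := volume) epanechnikov_nonneg
    integral_epanechnikov (by simpa using tendsto_norm_mul_epanechnikov_cobounded) hg h'g
  simpa [Function.comp_def] using this.comp tendsto_inv_nhdsGT_zero

lemma shell_density_eq_epanechnikov {M r₀ r : ℝ} (hr₀ : 0 < r₀) (hr : r ≠ 0) :
    4 * π * r ^ 2 * (if |r| < r₀ then 3 * M / (8 * π * r₀ ^ 3) * (r₀ ^ 2 / r ^ 2 - 1) else 0)
      = 2 * M * (r₀⁻¹ * epanechnikov (r₀⁻¹ * r)) := by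
  have hmem : r₀⁻¹ * r ∈ Ioo (-1) 1 ↔ |r| < r₀ := by
    rw [mem_Ioo_neg_one_one_iff, abs_mul, abs_inv, abs_of_pos hr₀, inv_mul_lt_one₀ hr₀]
  by_cases h : |r| < r₀
  · rw [if_pos h, epanechnikov, indicator_of_mem (hmem.2 h)]
    field_simp
    ring
  · rw [if_neg h, epanechnikov, indicator_of_notMem (mt hmem.1 h)]
    simp

theorem delta_source_limit_general
    (G M : ℝ) :
    (∀ r : ℝ, r ≠ 0 →
      Tendsto (fun r₀ : ℝ =>
          if |r| ≤ r₀ then -(3 * G * M / (2 * r₀)) * (1 - (r / r₀) ^ 2 / 3)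
          else -G * M / |r|)
        (nhdsWithin 0 (Set.Ioi 0)) (nhds (-G * M / |r|))) ∧
    (∀ f : ℝ → ℝ, Continuous f → HasCompactSupport f →
      Tendsto (fun r₀ : ℝ =>
          ∫ r : ℝ, (4 * π * r ^ 2) *
            (if |r| < r₀ then (3 * M / (8 * π * r₀ ^ 3)) * (r₀ ^ 2 / r ^ 2 - 1) else 0)
            * f r)
        (nhdsWithin 0 (Set.Ioi 0)) (nhds (2 * M * f 0))) := by
  refine ⟨fun r hr => tendsto_const_nhds.congr' ?_, fun f hf hfc => ?_⟩
  · filter_upwards [Ioo_mem_nhdsGT (abs_pos.2 hr)] with r₀ hr₀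
    rw [if_neg (not_le.2 hr₀.2)]
  · refine ((tendsto_integral_rescaled_epanechnikov_mul (hf.integrable_of_hasCompactSupport hfc)
      hf.continuousAt).const_mul (2 * M)).congr' ?_
    filter_upwards [self_mem_nhdsWithin] with r₀ (hr₀ : 0 < r₀)
    rw [← integral_const_mul]
    refine integral_congr_ae ?_
    filter_upwards [(countable_singleton (0 : ℝ)).ae_notMem volume] with r (hr : r ≠ 0)
    rw [shell_density_eq_epanechnikov hr₀ hr]
    ring

/-- In the limit r₀ → 0⁺ with M fixed: the potential Φ^{(A)} converges pointwise
on ℝ \ {0} to -GM/|r|, and the density ε^{(A)} (with p₀ = 3M/(8πr₀³)) converges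
distributionally to M δ(r)/(2πr²): for every continuous compactly supported f,
∫ 4π r² ε^{(A)}(r) f(r) dr → 2M f(0). -/
theorem delta_source_limit
    (G M : ℝ) (hG : 0 < G) (hM : 0 < M) :
    (∀ r : ℝ, r ≠ 0 →
      Tendsto (fun r₀ : ℝ =>
          if |r| ≤ r₀ then -(3 * G * M / (2 * r₀)) * (1 - (r / r₀) ^ 2 / 3)
          else -G * M / |r|)
        (nhdsWithin 0 (Set.Ioi 0)) (nhds (-G * M / |r|))) ∧
    (∀ f : ℝ → ℝ, Continuous f → HasCompactSupport f →
      Tendsto (fun r₀ : ℝ =>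
          ∫ r : ℝ, (4 * π * r ^ 2) *
            (if |r| < r₀ then (3 * M / (8 * π * r₀ ^ 3)) * (r₀ ^ 2 / r ^ 2 - 1) else 0)
            * f r)
        (nhdsWithin 0 (Set.Ioi 0)) (nhds (2 * M * f 0))) :=
  delta_source_limit_general G M
end
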